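/- For all nonnegative integers N, j, n, the number of partitions π into distinct parts with largest part ≤ N, O(π) = n and γ(π) = j equals the number of partitions of n into exactly j parts whose largest hook length is at most N, i.e., partitions μ = (μ1, …, μj) of n into exactly j parts with μ1 + j − 1 ≤ N. -/

import Mathlib

/-- Sum of `f` over the entries of a list at even 0-based positions, i.e. over the
odd-indexed parts `λ1, λ3, λ5, …` of a partition `(λ1, λ2, λ3, …)`. -/
def sumAlt (f : ℕ → ℕ) : List ℕ → ℕ
  | [] => 0
  | [a] => f a
  | a :: _ :: l => f a + sumAlt f l

/-- `O(π) = λ1 + λ3 + λ5 + ⋯`, the sum of the odd-indexed parts. -/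
def Osum (l : List ℕ) : ℕ := sumAlt id l

/-- `E(π) = λ2 + λ4 + λ6 + ⋯`, the sum of the even-indexed parts. -/
def Esum (l : List ℕ) : ℕ := sumAlt id l.tail

/-- `γ(π) = λ1 − λ2 + λ3 − λ4 + ⋯ = O(π) − E(π)`, the alternating sum of the parts.
For a weakly decreasing list we have `Osum l ≥ Esum l`, so natural subtraction is exact. -/
def gammaSum (l : List ℕ) : ℕ := Osum l - Esum l

/-- `⌈O⌉(π) = ∑ ⌈λ_{2i−1}/2⌉`. -/
def ceilO (l : List ℕ) : ℕ := sumAlt (fun a => (a + 1) / 2) l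

/-- `⌊O⌋(π) = ∑ ⌊λ_{2i−1}/2⌋`. -/
def floorO (l : List ℕ) : ℕ := sumAlt (fun a => a / 2) l

/-- `⌈E⌉(π) = ∑ ⌈λ_{2i}/2⌉`. -/
def ceilE (l : List ℕ) : ℕ := sumAlt (fun a => (a + 1) / 2) l.tail

/-- `⌊E⌋(π) = ∑ ⌊λ_{2i}/2⌋`. -/
def floorE (l : List ℕ) : ℕ := sumAlt (fun a => a / 2) l.tail

/-- A partition: a weakly decreasing finite list of positive integers. -/
def IsPartition (l : List ℕ) : Prop := l.Pairwise (· ≥ ·) ∧ ∀ x ∈ l, 0 < x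

/-- A partition into distinct parts: a strictly decreasing finite list of positive integers. -/
def IsDistinctPartition (l : List ℕ) : Prop := l.Pairwise (· > ·) ∧ ∀ x ∈ l, 0 < x

/-- The Gaussian binomial coefficient `[n choose k]_q` as a polynomial in `q`
(defined by the q-Pascal recurrence; it equals `(q;q)_n / ((q;q)_k (q;q)_{n−k})`). -/
noncomputable def qbinom : ℕ → ℕ → Polynomial ℤ
  | _, 0 => 1
  | 0, _ + 1 => 0
  | n + 1, k + 1 => qbinom n k + Polynomial.X ^ (k + 1) * qbinom n (k + 1)

/-!
Both sides satisfy the recurrence `f(N+1, j+1, n+1) = f(N, j, n) + f(N, j+1, n-j)` and have the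
same boundary values at `j = 0`, `N = 0` and `n = 0`.

For partitions into `j + 1` parts with hook length `≤ N + 1`, split on whether `1` is a part:
removing one part `1`, or subtracting `1` from every part, gives the two terms.

For distinct partitions `λ` with parts `≤ N + 1`, `O(λ) = n + 1` and `γ(λ) = j + 1`, split on
whether `λ₂ = λ₁ - 1`. If not, lowering `λ₁` by one gives the first term. If so, the tail
`μ = (λ₂, λ₃, …)` has `O(μ) = n - j` and `γ(μ) = λ₁ - γ(λ)`, and it is repaired by the involution
reflecting every even-indexed part between its odd-indexed neighbours: this keeps `O` and the
largest part and sends `γ(μ)` to `μ₁ + 1 - γ(μ) = γ(λ)`.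
-/

open Set

lemma List.headI_mem {α : Type*} [Inhabited α] {l : List α} (hl : l ≠ []) : l.headI ∈ l := by
  obtain ⟨a, l, rfl⟩ := List.exists_cons_of_ne_nil hl
  exact List.mem_cons_self

lemma List.headI_append_of_ne_nil {α : Type*} [Inhabited α] {l₁ : List α} (l₂ : List α)
    (h : l₁ ≠ []) : (l₁ ++ l₂).headI = l₁.headI := by
  obtain ⟨a, l, rfl⟩ := List.exists_cons_of_ne_nil h
  rfl

lemma List.le_headI_of_pairwise_ge {l : List ℕ} (h : l.Pairwise (· ≥ ·)) {x : ℕ} (hx : x ∈ l) :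
    x ≤ l.headI := by
  cases l with
  | nil => simp at hx
  | cons a l =>
    rcases List.mem_cons.mp hx with rfl | hx
    · exact le_rfl
    · exact List.rel_of_pairwise_cons h hx

lemma List.forall_le_iff_headI_le_of_pairwise_ge {l : List ℕ} (h : l.Pairwise (· ≥ ·)) {N : ℕ} :
    (∀ x ∈ l, x ≤ N) ↔ l.headI ≤ N := by
  refine ⟨fun hN => ?_, fun hN x hx => (List.le_headI_of_pairwise_ge h hx).trans hN⟩
  rcases eq_or_ne l [] with rfl | hl
  · exact Nat.zero_le N
  · exact hN _ (List.headI_mem hl)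

lemma List.finite_setOf_length_le_forall_le (k m : ℕ) :
    {l : List ℕ | l.length ≤ k ∧ ∀ x ∈ l, x ≤ m}.Finite := by
  refine ((List.finite_length_le (Fin (m + 1)) k).image (List.map Fin.val)).subset ?_
  rintro l ⟨hk, hm⟩
  refine ⟨l.pmap (fun x hx => ⟨x, Nat.lt_succ_of_le hx⟩) hm, by simpa using hk, ?_⟩
  simp [List.map_pmap]

lemma Set.ncard_eq_of_inverse {α β : Type*} {s : Set α} {t : Set β} {f : α → β} {g : β → α}
    (hf : ∀ a ∈ s, f a ∈ t ∧ g (f a) = a) (hg : ∀ b ∈ t, g b ∈ s ∧ f (g b) = b) :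
    s.ncard = t.ncard :=
  (InvOn.bijOn ⟨fun a ha => (hf a ha).2, fun b hb => (hg b hb).2⟩ (fun a ha => (hf a ha).1)
    (fun b hb => (hg b hb).1)).ncard_eq

@[simp] lemma Osum_nil : Osum [] = 0 := rfl

@[simp] lemma Esum_nil : Esum [] = 0 := rfl

@[simp] lemma Osum_cons (a : ℕ) (l : List ℕ) : Osum (a :: l) = a + Esum l := by
  cases l <;> rfl

@[simp] lemma Esum_cons (a : ℕ) (l : List ℕ) : Esum (a :: l) = Osum l := rfl

lemma isDistinctPartition_cons {a : ℕ} {l : List ℕ} :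
    IsDistinctPartition (a :: l) ↔ l.headI < a ∧ IsDistinctPartition l := by
  constructor
  · rintro ⟨hlt, hpos⟩
    refine ⟨?_, List.Pairwise.of_cons hlt, fun x hx => hpos x (List.mem_cons_of_mem a hx)⟩
    cases l with
    | nil => exact hpos a List.mem_cons_self
    | cons b l => exact List.rel_of_pairwise_cons hlt List.mem_cons_self
  · rintro ⟨ha, hl⟩
    refine ⟨List.pairwise_cons.mpr ⟨fun x hx => ?_, hl.1⟩, ?_⟩
    · exact (List.le_headI_of_pairwise_ge (hl.1.imp le_of_lt) hx).trans_lt ha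
    · simp only [List.forall_mem_cons]
      exact ⟨by omega, hl.2⟩

namespace IsDistinctPartition

variable {l : List ℕ}

lemma nil : IsDistinctPartition [] := ⟨.nil, by simp⟩

lemma pairwise_ge (h : IsDistinctPartition l) : l.Pairwise (· ≥ ·) := h.1.imp le_of_lt

lemma headI_pos (h : IsDistinctPartition l) (hl : l ≠ []) : 0 < l.headI :=
  h.2 _ (List.headI_mem hl)

lemma length_le {N : ℕ} (h : IsDistinctPartition l) (hN : ∀ x ∈ l, x ≤ N) : l.length ≤ N := by
  classical
  rw [← List.toFinset_card_of_nodup (h.1.imp ne_of_gt)]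
  refine (Finset.card_le_card fun x hx => ?_).trans (Nat.card_Icc 1 N).le
  rw [List.mem_toFinset] at hx
  exact Finset.mem_Icc.mpr ⟨h.2 x hx, hN x hx⟩

lemma Esum_le_Osum : ∀ {l : List ℕ}, IsDistinctPartition l → Esum l ≤ Osum l
  | [], _ => le_rfl
  | [_], _ => by simp
  | a :: b :: l, h => by
    obtain ⟨hab, h'⟩ := isDistinctPartition_cons.mp h
    have := Esum_le_Osum (isDistinctPartition_cons.mp h').2
    simp only [Osum_cons, Esum_cons, List.headI_cons] at *
    omega

lemma Esum_lt_Osum (h : IsDistinctPartition l) (hl : l ≠ []) : Esum l < Osum l := by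
  obtain ⟨a, l, rfl⟩ := List.exists_cons_of_ne_nil hl
  obtain ⟨ha, h'⟩ := isDistinctPartition_cons.mp h
  cases l with
  | nil => simpa using ha
  | cons b l =>
    have := (isDistinctPartition_cons.mp h').2.Esum_le_Osum
    simp only [Osum_cons, Esum_cons, List.headI_cons] at *
    omega

lemma gammaSum_add_Esum (h : IsDistinctPartition l) : gammaSum l + Esum l = Osum l :=
  Nat.sub_add_cancel h.Esum_le_Osum

end IsDistinctPartition

def posSingleton (m : ℕ) : List ℕ := if m = 0 then [] else [m]

@[simp] lemma headI_posSingleton (m : ℕ) : (posSingleton m).headI = m := by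
  unfold posSingleton; split_ifs <;> simp [*]

@[simp] lemma tail_posSingleton (m : ℕ) : (posSingleton m).tail = [] := by
  unfold posSingleton; split_ifs <;> rfl

@[simp] lemma Osum_posSingleton (m : ℕ) : Osum (posSingleton m) = m := by
  unfold posSingleton; split_ifs <;> simp [*]

@[simp] lemma Esum_posSingleton (m : ℕ) : Esum (posSingleton m) = 0 := by
  unfold posSingleton; split_ifs <;> simp

lemma isDistinctPartition_posSingleton (m : ℕ) : IsDistinctPartition (posSingleton m) := by
  unfold posSingleton
  split_ifs with h
  · exact .nil
  · exact isDistinctPartition_cons.mpr ⟨by simp; omega, .nil⟩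

/-- Reflects every even-indexed part `λ_{2i}` in the open interval `(λ_{2i+1}, λ_{2i-1})`,
`λ_{2i} ↦ λ_{2i-1} + λ_{2i+1} - λ_{2i}`, where a missing `λ_{2i+1}` counts as `-1` and a part
`0` stands for a missing `λ_{2i}`. -/
def reflectEven : List ℕ → List ℕ
  | [] => []
  | [a] => a :: posSingleton (a - 1)
  | [a, b] => a :: posSingleton (a - 1 - b)
  | a :: b :: c :: l => a :: (a + c - b) :: reflectEven (c :: l)

@[simp] lemma headI_reflectEven (l : List ℕ) : (reflectEven l).headI = l.headI := by
  rcases l with _ | ⟨a, _ | ⟨b, _ | ⟨c, l⟩⟩⟩ <;> rfl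

lemma Osum_reflectEven (l : List ℕ) : Osum (reflectEven l) = Osum l := by
  induction l using reflectEven.induct with
  | case1 | case2 | case3 => simp [reflectEven]
  | case4 a b c l ih =>
    simp only [reflectEven, Osum_cons, Esum_cons] at ih ⊢
    omega

namespace IsDistinctPartition

variable {l : List ℕ}

lemma reflectEven (h : IsDistinctPartition l) : IsDistinctPartition (reflectEven l) := by
  induction l using _root_.reflectEven.induct with
  | case1 => exact h
  | case2 a | case3 a b =>
    have := (isDistinctPartition_cons.mp h).1
    exact isDistinctPartition_cons.mpr ⟨by simp at *; omega, isDistinctPartition_posSingleton _⟩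
  | case4 a b c l ih =>
    obtain ⟨hab, h'⟩ := isDistinctPartition_cons.mp h
    obtain ⟨hbc, h''⟩ := isDistinctPartition_cons.mp h'
    simp only [List.headI_cons] at hab hbc
    simp only [_root_.reflectEven, isDistinctPartition_cons, List.headI_cons, headI_reflectEven]
    exact ⟨by omega, by omega, ih h''⟩

lemma Esum_reflectEven_add (h : IsDistinctPartition l) (hl : l ≠ []) :
    Esum (_root_.reflectEven l) + Esum l + l.headI + 1 = 2 * Osum l := by
  induction l using _root_.reflectEven.induct with
  | case1 => exact absurd rfl hl
  | case2 a | case3 a b =>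
    have := (isDistinctPartition_cons.mp h).1
    simp only [_root_.reflectEven, Esum_cons, Osum_cons, Osum_posSingleton, Esum_nil, Osum_nil,
      List.headI_cons] at *
    omega
  | case4 a b c l ih =>
    obtain ⟨hab, h'⟩ := isDistinctPartition_cons.mp h
    have := ih (isDistinctPartition_cons.mp h').2 (List.cons_ne_nil c l)
    simp only [_root_.reflectEven, Esum_cons, Osum_cons, List.headI_cons] at *
    omega

lemma reflectEven_reflectEven (h : IsDistinctPartition l) :
    _root_.reflectEven (_root_.reflectEven l) = l := by
  induction l using _root_.reflectEven.induct with
  | case1 => rfl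
  | case2 a => by_cases ha : a - 1 = 0 <;> simp [_root_.reflectEven, posSingleton, ha]
  | case3 a b =>
    obtain ⟨hab, h'⟩ := isDistinctPartition_cons.mp h
    have hb := (h'.headI_pos (List.cons_ne_nil b [])).ne'
    simp only [List.headI_cons] at hab hb
    by_cases hab' : a - 1 - b = 0
    · simp [_root_.reflectEven, posSingleton, show a - 1 = b by omega, hb]
    · simp [_root_.reflectEven, posSingleton, hab', show a - 1 - (a - 1 - b) = b by omega, hb]
  | case4 a b c l ih =>
    obtain ⟨hab, h'⟩ := isDistinctPartition_cons.mp h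
    obtain ⟨t, ht⟩ : ∃ t, _root_.reflectEven (c :: l) = c :: t := by
      rcases l with _ | ⟨d, _ | ⟨e, l⟩⟩ <;> exact ⟨_, rfl⟩
    have hb : a + c - (a + c - b) = b := by simp at hab; omega
    rw [_root_.reflectEven, ht, _root_.reflectEven, ← ht, ih (isDistinctPartition_cons.mp h').2, hb]

end IsDistinctPartition

def distinctSet (N j n : ℕ) : Set (List ℕ) :=
  {l | IsDistinctPartition l ∧ (∀ x ∈ l, x ≤ N) ∧ Osum l = n ∧ gammaSum l = j}

lemma mem_distinctSet {N j n : ℕ} {l : List ℕ} :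
    l ∈ distinctSet N j n ↔
      IsDistinctPartition l ∧ l.headI ≤ N ∧ Osum l = n ∧ Esum l + j = Osum l := by
  rw [distinctSet, mem_ofPred_eq]
  refine and_congr_right fun h => ?_
  rw [List.forall_le_iff_headI_le_of_pairwise_ge h.pairwise_ge]
  have := h.gammaSum_add_Esum
  exact and_congr_right fun _ => and_congr_right fun _ => by omega

def topConsecutive : Set (List ℕ) := {l | l.tail ≠ [] ∧ l.tail.headI + 1 = l.headI}

def lowerHead (l : List ℕ) : List ℕ := posSingleton (l.headI - 1) ++ l.tail

def raiseHead (l : List ℕ) : List ℕ := (l.headI + 1) :: l.tail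

namespace distinctSet

variable {N j n : ℕ} {l m : List ℕ}

lemma finite (N j n : ℕ) : (distinctSet N j n).Finite :=
  (List.finite_setOf_length_le_forall_le N N).subset fun _ hl => ⟨hl.1.length_le hl.2.1, hl.2.1⟩

lemma ne_nil_of_mem (hl : l ∈ distinctSet N (j + 1) n) : l ≠ [] := by
  rintro rfl
  simp [distinctSet, gammaSum] at hl

lemma lowerHead_spec (hl : l ∈ distinctSet (N + 1) (j + 1) (n + 1) \ topConsecutive) :
    lowerHead l ∈ distinctSet N j n ∧ raiseHead (lowerHead l) = l := by
  obtain ⟨hl, hC⟩ := hl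
  obtain ⟨a, L, rfl⟩ := List.exists_cons_of_ne_nil (ne_nil_of_mem hl)
  obtain ⟨h, hN, hO, hγ⟩ := mem_distinctSet.mp hl
  obtain ⟨ha, hL⟩ := isDistinctPartition_cons.mp h
  simp only [topConsecutive, mem_ofPred_eq, List.tail_cons, List.headI_cons, not_and] at hC
  simp only [Osum_cons, Esum_cons, List.headI_cons] at ha hN hO hγ
  rcases eq_or_ne L [] with rfl | hLne
  · have hl' : lowerHead [a] = posSingleton (a - 1) := by simp [lowerHead]
    simp only [Osum_nil, Esum_nil, List.headI_nil, Nat.default_eq_zero] at ha hO hγ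
    rw [hl', mem_distinctSet]
    exact ⟨⟨isDistinctPartition_posSingleton _, by simp; omega, by simp; omega, by simp; omega⟩,
      by simp [raiseHead]; omega⟩
  · have hLa : L.headI + 1 < a := by have := hC hLne; omega
    have hl' : lowerHead (a :: L) = (a - 1) :: L := by
      simp [lowerHead, posSingleton, show a - 1 ≠ 0 by omega]
    rw [hl', mem_distinctSet]
    exact ⟨⟨isDistinctPartition_cons.mpr ⟨by omega, hL⟩, by simp; omega, by simp; omega,
      by simp; omega⟩, by simp [raiseHead]; omega⟩

lemma raiseHead_spec (hm : m ∈ distinctSet N j n) :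
    raiseHead m ∈ distinctSet (N + 1) (j + 1) (n + 1) \ topConsecutive ∧
      lowerHead (raiseHead m) = m := by
  obtain ⟨h, hN, hO, hγ⟩ := mem_distinctSet.mp hm
  rcases eq_or_ne m [] with rfl | hm
  · simp only [Osum_nil, Esum_nil, zero_add] at hO hγ
    subst hO hγ
    refine ⟨⟨mem_distinctSet.mpr ⟨isDistinctPartition_cons.mpr ⟨by simp, .nil⟩, ?_⟩, ?_⟩, ?_⟩ <;>
      simp [raiseHead, lowerHead, topConsecutive, posSingleton]
  obtain ⟨x, M, rfl⟩ := List.exists_cons_of_ne_nil hm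
  obtain ⟨hx, hM⟩ := isDistinctPartition_cons.mp h
  have hx0 := h.headI_pos hm
  simp only [Osum_cons, Esum_cons, List.headI_cons] at hN hO hγ hx0
  refine ⟨⟨mem_distinctSet.mpr ⟨isDistinctPartition_cons.mpr ⟨?_, hM⟩, ?_, ?_, ?_⟩, ?_⟩,
    by simp [raiseHead, lowerHead, posSingleton, hx0.ne']⟩
  all_goals simp only [raiseHead, topConsecutive, List.headI_cons, List.tail_cons, Osum_cons,
    Esum_cons, mem_ofPred_eq]
  all_goals omega

lemma reflectEven_tail_spec (hl : l ∈ distinctSet (N + 1) (j + 1) (n + 1) ∩ topConsecutive) :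
    reflectEven l.tail ∈ distinctSet N (j + 1) (n - j) ∧
      ((reflectEven l.tail).headI + 1) :: reflectEven (reflectEven l.tail) = l := by
  obtain ⟨hl, hLne, hLa⟩ := hl
  obtain ⟨a, L, rfl⟩ := List.exists_cons_of_ne_nil (ne_nil_of_mem hl)
  obtain ⟨h, hN, hO, hγ⟩ := mem_distinctSet.mp hl
  obtain ⟨ha, hL⟩ := isDistinctPartition_cons.mp h
  simp only [List.tail_cons, List.headI_cons] at hLne hLa hN ⊢
  have := hL.Esum_reflectEven_add hLne
  have := Osum_reflectEven L
  simp only [Osum_cons, Esum_cons] at hO hγ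
  refine ⟨mem_distinctSet.mpr ⟨hL.reflectEven, by simp; omega, by omega, by omega⟩, ?_⟩
  rw [hL.reflectEven_reflectEven, headI_reflectEven, hLa]

lemma cons_reflectEven_spec (hm : m ∈ distinctSet N (j + 1) (n - j)) :
    (m.headI + 1) :: reflectEven m ∈ distinctSet (N + 1) (j + 1) (n + 1) ∩ topConsecutive ∧
      reflectEven ((m.headI + 1) :: reflectEven m).tail = m := by
  have hm0 := ne_nil_of_mem hm
  obtain ⟨h, hN, hO, hγ⟩ := mem_distinctSet.mp hm
  have := h.Esum_reflectEven_add hm0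
  have := h.headI_pos hm0
  have hT : reflectEven m ≠ [] := fun hT => by
    have := headI_reflectEven m
    simp only [hT, List.headI_nil, Nat.default_eq_zero] at this
    omega
  refine ⟨⟨mem_distinctSet.mpr ⟨isDistinctPartition_cons.mpr ⟨by simp, h.reflectEven⟩,
    by simp; omega, ?_, ?_⟩, hT, by simp⟩, h.reflectEven_reflectEven⟩
  all_goals simp only [Osum_cons, Esum_cons, Osum_reflectEven]
  all_goals omega

end distinctSet

lemma ncard_distinctSet_succ (N j n : ℕ) :
    (distinctSet (N + 1) (j + 1) (n + 1)).ncard =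
      (distinctSet N j n).ncard + (distinctSet N (j + 1) (n - j)).ncard := by
  rw [← ncard_inter_add_ncard_sdiff_eq_ncard _ topConsecutive (distinctSet.finite _ _ _), add_comm]
  congr 1
  · exact ncard_eq_of_inverse (fun _ => distinctSet.lowerHead_spec)
      (fun _ => distinctSet.raiseHead_spec)
  · exact ncard_eq_of_inverse (f := fun l => reflectEven l.tail)
      (g := fun m => (m.headI + 1) :: reflectEven m)
      (fun _ => distinctSet.reflectEven_tail_spec) (fun _ => distinctSet.cons_reflectEven_spec)

lemma IsPartition.dropLast_append_one {l : List ℕ} (h : IsPartition l) (h1 : 1 ∈ l) :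
    l.dropLast ++ [1] = l := by
  have hne := List.ne_nil_of_mem h1
  have hlast : l.getLast hne = 1 := le_antisymm (h.1.rel_getLast h1) (h.2 _ (List.getLast_mem hne))
  conv_rhs => rw [← List.dropLast_append_getLast hne, hlast]

lemma isPartition_append_one {m : List ℕ} : IsPartition (m ++ [1]) ↔ IsPartition m := by
  simp only [IsPartition, List.pairwise_append, List.pairwise_singleton, List.mem_singleton,
    List.mem_append, true_and]
  constructor
  · rintro ⟨⟨hm, -⟩, hpos⟩
    exact ⟨hm, fun x hx => hpos x (.inl hx)⟩
  · rintro ⟨hm, hpos⟩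
    exact ⟨⟨hm, fun x hx y hy => hy ▸ hpos x hx⟩, fun x hx => hx.elim (hpos x) (by omega)⟩

lemma isPartition_map_succ {m : List ℕ} :
    IsPartition (m.map (· + 1)) ∧ 1 ∉ m.map (· + 1) ↔ IsPartition m := by
  have h1 : 1 ∉ m.map (· + 1) ↔ ∀ x ∈ m, 0 < x := by
    simp only [List.mem_map, Nat.add_eq_right, not_exists, not_and, Nat.pos_iff_ne_zero]
  rw [IsPartition, IsPartition, h1, List.pairwise_map]
  simp

def hookSet (N j n : ℕ) : Set (List ℕ) :=
  {l | IsPartition l ∧ l.sum = n ∧ l.length = j ∧ l.headI + l.length ≤ N + 1}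

namespace hookSet

variable {N j n : ℕ} {l m : List ℕ}

lemma finite (N j n : ℕ) : (hookSet N j n).Finite := by
  refine (List.finite_setOf_length_le_forall_le j (N + 1)).subset fun l ⟨h, _, hj, hN⟩ => ?_
  refine ⟨hj.le, fun x hx => ?_⟩
  have := List.le_headI_of_pairwise_ge h.1 hx
  omega

lemma append_one_mem_iff : m ++ [1] ∈ hookSet (N + 1) (j + 1) (n + 1) ↔ m ∈ hookSet N j n := by
  simp only [hookSet, mem_ofPred_eq, isPartition_append_one, List.sum_append, List.length_append,
    List.sum_singleton, List.length_singleton]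
  refine and_congr_right fun _ => ?_
  rcases eq_or_ne m [] with rfl | hm
  · simp
    omega
  · rw [List.headI_append_of_ne_nil _ hm]
    omega

lemma map_succ_mem_iff :
    m.map (· + 1) ∈ hookSet (N + 1) (j + 1) (n + 1) \ {l | 1 ∈ l} ↔
      m ∈ hookSet N (j + 1) (n - j) := by
  rcases eq_or_ne m [] with rfl | hm
  · simp [hookSet]
  have hsum : (m.map (· + 1)).sum = m.sum + m.length := by simp [List.sum_map_add]
  have hhead : (m.map (· + 1)).headI = m.headI + 1 := by
    obtain ⟨x, M, rfl⟩ := List.exists_cons_of_ne_nil hm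
    rfl
  simp only [hookSet, mem_sdiff, mem_ofPred_eq, hsum, hhead, List.length_map]
  constructor
  · rintro ⟨⟨hp, hs, hlen, hhook⟩, h1⟩
    exact ⟨isPartition_map_succ.mp ⟨hp, h1⟩, by omega, hlen, by omega⟩
  · rintro ⟨hp, hs, hlen, hhook⟩
    have := List.length_le_sum_of_one_le _ hp.2
    obtain ⟨hp', h1⟩ := isPartition_map_succ.mpr hp
    exact ⟨⟨hp', by omega, hlen, by omega⟩, h1⟩

lemma dropLast_spec (hl : l ∈ hookSet (N + 1) (j + 1) (n + 1) ∩ {l | 1 ∈ l}) :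
    l.dropLast ∈ hookSet N j n ∧ l.dropLast ++ [1] = l := by
  have h := hl.1.1.dropLast_append_one hl.2
  refine ⟨append_one_mem_iff.mp ?_, h⟩
  rw [h]
  exact hl.1

lemma append_one_spec (hm : m ∈ hookSet N j n) :
    m ++ [1] ∈ hookSet (N + 1) (j + 1) (n + 1) ∩ {l | 1 ∈ l} ∧ (m ++ [1]).dropLast = m :=
  ⟨⟨append_one_mem_iff.mpr hm, by simp⟩, List.dropLast_concat⟩

lemma map_pred_spec (hl : l ∈ hookSet (N + 1) (j + 1) (n + 1) \ {l | 1 ∈ l}) :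
    l.map (· - 1) ∈ hookSet N (j + 1) (n - j) ∧ (l.map (· - 1)).map (· + 1) = l := by
  have h : (l.map (· - 1)).map (· + 1) = l := by
    rw [List.map_map]
    conv_rhs => rw [← List.map_id l]
    exact List.map_congr_left fun x hx => Nat.sub_add_cancel (hl.1.1.2 x hx)
  exact ⟨map_succ_mem_iff.mp (by rwa [h]), h⟩

lemma map_succ_spec (hm : m ∈ hookSet N (j + 1) (n - j)) :
    m.map (· + 1) ∈ hookSet (N + 1) (j + 1) (n + 1) \ {l | 1 ∈ l} ∧
      (m.map (· + 1)).map (· - 1) = m :=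
  ⟨map_succ_mem_iff.mpr hm, by simp [Function.comp_def]⟩

end hookSet

lemma ncard_hookSet_succ (N j n : ℕ) :
    (hookSet (N + 1) (j + 1) (n + 1)).ncard =
      (hookSet N j n).ncard + (hookSet N (j + 1) (n - j)).ncard := by
  rw [← ncard_inter_add_ncard_sdiff_eq_ncard _ {l | 1 ∈ l} (hookSet.finite _ _ _)]
  congr 1
  · exact ncard_eq_of_inverse (fun _ => hookSet.dropLast_spec) (fun _ => hookSet.append_one_spec)
  · exact ncard_eq_of_inverse (fun _ => hookSet.map_pred_spec) (fun _ => hookSet.map_succ_spec)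

lemma distinctSet_gammaSum_zero (N n : ℕ) : distinctSet N 0 n = {l | l = [] ∧ n = 0} := by
  ext l
  rw [mem_distinctSet, mem_ofPred_eq]
  constructor
  · rintro ⟨h, -, hO, hγ⟩
    rcases eq_or_ne l [] with rfl | hl
    · exact ⟨rfl, hO.symm⟩
    · have := h.Esum_lt_Osum hl
      omega
  · rintro ⟨rfl, rfl⟩
    exact ⟨.nil, by simp, rfl, rfl⟩

lemma hookSet_length_zero (N n : ℕ) : hookSet N 0 n = {l | l = [] ∧ n = 0} := by
  ext l
  simp only [hookSet, mem_ofPred_eq, List.length_eq_zero_iff]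
  constructor
  · rintro ⟨-, hs, rfl, -⟩
    exact ⟨rfl, hs.symm⟩
  · rintro ⟨rfl, rfl⟩
    exact ⟨⟨.nil, by simp⟩, rfl, rfl, by simp⟩

lemma distinctSet_eq_empty {N j n : ℕ} (h : N = 0 ∨ n = 0) : distinctSet N (j + 1) n = ∅ := by
  refine eq_empty_of_forall_notMem fun l hl => ?_
  have hne := distinctSet.ne_nil_of_mem hl
  obtain ⟨hd, hN, hO, -⟩ := mem_distinctSet.mp hl
  have := hd.headI_pos hne
  have := hd.Esum_lt_Osum hne
  omega

lemma hookSet_eq_empty {N j n : ℕ} (h : N = 0 ∨ n = 0) : hookSet N (j + 1) n = ∅ := by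
  refine eq_empty_of_forall_notMem fun l ⟨hp, hs, hlen, hhook⟩ => ?_
  have hne : l ≠ [] := by rintro rfl; simp at hlen
  have := hp.2 _ (List.headI_mem hne)
  have := List.headI_le_sum l
  omega

theorem ncard_distinctSet_eq_ncard_hookSet :
    ∀ N j n : ℕ, (distinctSet N j n).ncard = (hookSet N j n).ncard
  | _, 0, _ => by rw [distinctSet_gammaSum_zero, hookSet_length_zero]
  | 0, _ + 1, _ => by rw [distinctSet_eq_empty (.inl rfl), hookSet_eq_empty (.inl rfl)]
  | _, _ + 1, 0 => by rw [distinctSet_eq_empty (.inr rfl), hookSet_eq_empty (.inr rfl)]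
  | N + 1, j + 1, n + 1 => by
    rw [ncard_distinctSet_succ, ncard_hookSet_succ, ncard_distinctSet_eq_ncard_hookSet N j n,
      ncard_distinctSet_eq_ncard_hookSet N (j + 1) (n - j)]

/-- The number of partitions into distinct parts `≤ N` with `O(π) = n` and `γ(π) = j`
equals the number of partitions of `n` into exactly `j` parts with largest hook length
`≤ N` (i.e. `μ1 + j ≤ N + 1`). -/
theorem refined_finite_schmidt_hook (N j n : ℕ) :
    Nat.card {l : List ℕ //
        IsDistinctPartition l ∧ (∀ x ∈ l, x ≤ N) ∧ Osum l = n ∧ gammaSum l = j} =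
      Nat.card {l : List ℕ //
        IsPartition l ∧ l.sum = n ∧ l.length = j ∧ l.headI + l.length ≤ N + 1} := by
  have := ncard_distinctSet_eq_ncard_hookSet N j n
  rwa [← Nat.card_coe_set_eq, ← Nat.card_coe_set_eq] at this
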